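/- The polynomial f̃ = −xy − 2z + x²z + y²z − xyz² + z³ is irreducible in the polynomial ring ℂ[x,y,z]. -/

import Mathlib

/-!
Viewed as a polynomial in `z` over `ℂ[x,y]`, `f̃` is a monic cubic, so it is irreducible as soon
as it has no root `r ∈ ℂ[x,y]`. Setting `x = y = t`, such a root would give `s ∈ ℂ[t]` with
`s (s² - t² s + 2t² - 2) = t²`; hence `s = c tⁱ` with `i ≤ 2`, and each of these three shapes
contradicts the equation.
-/

open MvPolynomial

/-- The defining polynomial `f̃ = −xy − 2z + x²z + y²z − xyz² + z³` of the affine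
canonical component of the character variety of the Whitehead link complement,
as an element of `ℂ[x,y,z]` with `x = X 0`, `y = X 1`, `z = X 2`. -/
noncomputable def whiteheadPoly : MvPolynomial (Fin 3) ℂ :=
  -X 0 * X 1 - 2 * X 2 + (X 0)^2 * X 2 + (X 1)^2 * X 2 - X 0 * X 1 * (X 2)^2 + (X 2)^3

namespace Polynomial

theorem Monic.irreducible_of_degree_le_three_of_not_isRoot {R : Type*} [CommRing R] [IsDomain R]
    {p : R[X]} (hp : p.Monic) (hp2 : 2 ≤ p.natDegree) (hp3 : p.natDegree ≤ 3)
    (hroot : ∀ r, ¬ p.IsRoot r) : Irreducible p := by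
  rw [hp.irreducible_iff_roots_eq_zero_of_degree_le_three hp2 hp3]
  exact Multiset.eq_zero_of_forall_notMem fun r hr ↦ hroot r (isRoot_of_mem_roots hr)

theorem exists_eq_C_mul_X_pow_of_dvd_X_pow {K : Type*} [Field K] {s : K[X]} {n : ℕ}
    (h : s ∣ X ^ n) : ∃ c : K, ∃ i ≤ n, s = C c * X ^ i := by
  obtain ⟨i, hin, u, hu⟩ := (dvd_prime_pow prime_X n).mp h
  obtain ⟨c, -, hc⟩ := isUnit_iff.mp (u⁻¹).isUnit
  exact ⟨c, i, hin, by rw [hc, mul_comm, Units.eq_mul_inv_iff_mul_eq, hu]⟩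

/- The left-hand side is `f̃(X, X, s)`. -/
theorem cube_sub_X_sq_mul_sq_add_ne_zero {K : Type*} [Field K] [CharZero K] (s : K[X]) :
    s ^ 3 - X ^ 2 * s ^ 2 + (2 * X ^ 2 - 2) * s - X ^ 2 ≠ 0 := by
  intro hs
  obtain ⟨c, i, hi, rfl⟩ := exists_eq_C_mul_X_pow_of_dvd_X_pow (s := s) (n := 2)
    ⟨s ^ 2 - X ^ 2 * s + 2 * X ^ 2 - 2, by linear_combination -hs⟩
  have heval (t : K) :
      c ^ 3 * t ^ (3 * i) - c ^ 2 * t ^ (2 * i + 2) + (2 * t ^ 2 - 2) * c * t ^ i - t ^ 2 = 0 := by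
    have := congrArg (eval t) hs
    simp only [eval_add, eval_sub, eval_mul, eval_pow, eval_C, eval_X, eval_ofNat,
      eval_zero] at this
    linear_combination this
  interval_cases i
  · have h0 := heval 0
    have h1 := heval 1
    norm_num at h0 h1
    have hsq : (c - 1) ^ 2 = 0 := by linear_combination h0 - h1
    obtain rfl : c = 1 := by linear_combination (pow_eq_zero_iff two_ne_zero).mp hsq
    norm_num at h0
  · have h1 := heval 1
    have hm1 := heval (-1)
    norm_num at h1 hm1
    have hsq : c ^ 2 = -1 := by linear_combination (-1 / 2 : K) * h1 + (-1 / 2 : K) * hm1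
    obtain rfl : c = 0 := by linear_combination -h1 + (c - 1) * hsq
    norm_num at hsq
  · have h1 := heval 1
    have h2 := heval 2
    norm_num at h1 h2
    obtain rfl : c = -5 / 2 := by linear_combination (1 / 24 : K) * h2 - (8 / 3 : K) * h1
    norm_num at h1

end Polynomial

noncomputable def whiteheadCubic : Polynomial (MvPolynomial (Fin 2) ℂ) :=
  Polynomial.X ^ 3 - Polynomial.C (X 0 * X 1) * Polynomial.X ^ 2
    + Polynomial.C (X 0 ^ 2 + X 1 ^ 2 - 2) * Polynomial.X - Polynomial.C (X 0 * X 1)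

theorem whiteheadCubic_monic : whiteheadCubic.Monic := by
  unfold whiteheadCubic
  monicity!

theorem whiteheadCubic_natDegree : whiteheadCubic.natDegree = 3 := by
  unfold whiteheadCubic
  compute_degree!

theorem whiteheadCubic_not_isRoot (r : MvPolynomial (Fin 2) ℂ) : ¬ whiteheadCubic.IsRoot r := by
  intro hr
  let diag := aeval (R := ℂ) fun _ : Fin 2 ↦ (Polynomial.X : Polynomial ℂ)
  apply Polynomial.cube_sub_X_sq_mul_sq_add_ne_zero (diag r)
  have := congrArg diag hr
  simp only [diag, whiteheadCubic, Polynomial.eval_ofNat, Polynomial.eval_sub, Polynomial.eval_add,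
    Polynomial.eval_mul, Polynomial.eval_pow, Polynomial.eval_C, Polynomial.eval_X, map_sub,
    map_add, map_mul, map_pow, map_ofNat, aeval_X, map_zero] at this
  linear_combination this

theorem whiteheadCubic_irreducible : Irreducible whiteheadCubic :=
  whiteheadCubic_monic.irreducible_of_degree_le_three_of_not_isRoot
    (by rw [whiteheadCubic_natDegree]; norm_num) whiteheadCubic_natDegree.le
    whiteheadCubic_not_isRoot

theorem finSuccEquiv_rename_swap_whiteheadPoly :
    finSuccEquiv ℂ 2 (rename (Equiv.swap 0 2) whiteheadPoly) = whiteheadCubic := by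
  have h0 : finSuccEquiv ℂ 2 (X 0) = Polynomial.X := finSuccEquiv_X_zero
  have h1 : finSuccEquiv ℂ 2 (X 1) = Polynomial.C (X 0) := by
    rw [show (1 : Fin 3) = Fin.succ 0 from rfl, finSuccEquiv_X_succ]
  have h2 : finSuccEquiv ℂ 2 (X 2) = Polynomial.C (X 1) := by
    rw [show (2 : Fin 3) = Fin.succ 1 from rfl, finSuccEquiv_X_succ]
  simp only [whiteheadPoly, whiteheadCubic, map_add, map_sub, map_mul, map_pow, map_neg,
    map_ofNat, rename_X, Equiv.swap_apply_left, Equiv.swap_apply_right,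
    Equiv.swap_apply_of_ne_of_ne (show (1 : Fin 3) ≠ 0 by decide) (show (1 : Fin 3) ≠ 2 by decide),
    h0, h1, h2]
  ring

theorem whiteheadPoly_irreducible : Irreducible whiteheadPoly := by
  let e := (renameEquiv ℂ (Equiv.swap (0 : Fin 3) 2)).trans (finSuccEquiv ℂ 2)
  have he : e whiteheadPoly = whiteheadCubic := finSuccEquiv_rename_swap_whiteheadPoly
  rw [← MulEquiv.irreducible_iff e, he]
  exact whiteheadCubic_irreducible
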